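/- Fix n ≥ 1 and δ = (δ_1,…,δ_n) ∈ {0,1}^n. For all integers k > n and 1 ≤ ℓ ≤ k, the specialized two-row factorial Schur Q-polynomial Q_{k,ℓ}(x_δ | x_⟨n⟩) is the zero polynomial in ℤ[x_1,…,x_n]. -/

import Mathlib

open Finset

noncomputable section

/-- The ambient polynomial ring `ℤ[x_1,…,x_N; a_2,a_3,…]`: the variable `Sum.inl i`
is `x_{i+1}`, and `Sum.inr j` is the parameter `a_{j+2}`. -/
abbrev QRing (N : ℕ) := MvPolynomial (Fin N ⊕ ℕ) ℤ

/-- The variable `x_i` (0-indexed). -/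
def xv (N : ℕ) (i : Fin N) : QRing N := MvPolynomial.X (Sum.inl i)

/-- The parameter `a_m` for `m ≥ 2`; `a_1 = 0`. -/
def av (N : ℕ) (m : ℕ) : QRing N :=
  if 2 ≤ m then MvPolynomial.X (Sum.inr (m - 2)) else 0

/-- The generating series `∏_{i=1}^N (1+x_i z)/(1−x_i z)`. -/
def genSeries (N : ℕ) : PowerSeries (QRing N) :=
  ∏ i : Fin N,
    (1 + PowerSeries.C (xv N i) * PowerSeries.X) *
      PowerSeries.invOfUnit (1 - PowerSeries.C (xv N i) * PowerSeries.X) 1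

/-- The Schur Q-polynomial `Q_m(x)`: the coefficient of `z^m` in
`∏_{i=1}^N (1+x_i z)/(1−x_i z)`. -/
def Qone (N m : ℕ) : QRing N := PowerSeries.coeff m (genSeries N)

/-- Elementary symmetric polynomial `e_j` in the parameters `a_m`, `m ∈ s`. -/
def esymA (N : ℕ) (s : Finset ℕ) (j : ℕ) : QRing N :=
  ∑ t ∈ s.powersetCard j, ∏ m ∈ t, av N m

/-- Complete homogeneous symmetric polynomial `h_m` in the parameters `a_i`, `i ∈ s`. -/
def hsymA (N : ℕ) (s : Finset ℕ) (m : ℕ) : QRing N :=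
  ∑ t ∈ s.sym m, ((t : Multiset ℕ).map (av N)).prod

/-- The one-row factorial Schur Q-polynomial
`Q_m(x|a) = Σ_{j=0}^{m−1} (−1)^j e_j(a_2,…,a_m) Q_{m−j}(x)` for `m ≥ 1`, `Q_0(x|a) = 1`. -/
def Qfact (N m : ℕ) : QRing N :=
  if m = 0 then 1 else
    ∑ j ∈ range m, (-1) ^ j * esymA N (Icc 2 m) j * Qone N (m - j)

/-- The coefficient `f_{k,ℓ}^{r,s}(a) = (−1)^{ℓ−s} Σ_{j=0}^{k+ℓ−r−s}
2 h_{k+ℓ−r−s−j}(a_{k+1},…,a_{r+1}) e_j(a_{s+2},…,a_ℓ)`. -/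
def fco (N k l r s : ℕ) : QRing N :=
  (-1) ^ (l - s) *
    ∑ j ∈ range (k + l - r - s + 1),
      2 * hsymA N (Icc (k + 1) (r + 1)) (k + l - r - s - j) * esymA N (Icc (s + 2) l) j

/-- The two-row factorial Schur Q-polynomial `Q_{k,ℓ}(x|a)` for `k ≥ ℓ ≥ 1`. -/
def Qfact2 (N k l : ℕ) : QRing N :=
  Qfact N k * Qfact N l +
    2 * ∑ i ∈ Icc 1 l, (-1) ^ i * Qfact N (k + i) * Qfact N (l - i) +
    ∑ r ∈ Icc k (k + l - 1), ∑ s ∈ range (k + l - r),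
      fco N k l r s * Qfact N r * Qfact N s

/-- The specialization `ℤ[x;a] → ℤ[x_1,…,x_n]` sending `x_i ↦ δ_i x_i` (for
`δ ∈ {0,1}^n`) and `a_m ↦ x_{n−m+2}` for `2 ≤ m ≤ n+1`, `a_m ↦ 0` for `m > n+1`
(0-indexed: the variable `Sum.inr j`, i.e. `a_{j+2}`, goes to `x` with 0-indexed
index `n−1−j` when `j < n`, and to `0` otherwise). -/
def specHom (n : ℕ) (δ : Fin n → Bool) : QRing n →+* MvPolynomial (Fin n) ℤ :=
  MvPolynomial.eval₂Hom (Int.castRingHom (MvPolynomial (Fin n) ℤ))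
    (Sum.elim (fun i => if δ i then MvPolynomial.X i else 0)
      (fun j => if h : j < n then MvPolynomial.X (⟨n - 1 - j, by omega⟩ : Fin n) else 0))

/-! Every summand of `Q_{k,ℓ}(x|a)` has a factor `Q_m(x|a)` with `m ≥ k > n`, so it suffices that
these one-row polynomials specialize to zero. `Q_m(x|a)` is the coefficient of `z^m` in
`∏_{i=2}^m (1 - a_i z) · ∏_j (1 + x_j z)/(1 - x_j z)`. Under the specialization the first product
becomes `∏_j (1 - x_j z)`, which cancels the denominators with `δ_j = 1` and leaves
`∏_{δ_j = 1} (1 + x_j z) ∏_{δ_j = 0} (1 - x_j z)`, a polynomial of degree `n` in `z`. -/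

namespace PowerSeries

variable {R ι : Type*} [CommRing R]

theorem coeff_prod_one_add_C_mul_X (s : Finset ι) (r : ι → R) (j : ℕ) :
    coeff j (∏ i ∈ s, (1 + C (r i) * X)) = ∑ t ∈ s.powersetCard j, ∏ i ∈ t, r i := by
  classical
  simp_rw [add_comm (1 : R⟦X⟧), Finset.prod_add, Finset.prod_const_one, mul_one,
    Finset.prod_mul_distrib, Finset.prod_const, ← map_prod, map_sum, coeff_C_mul_X_pow,
    Finset.powersetCard_eq_filter, Finset.sum_filter, eq_comm (a := j)]

theorem coeff_prod_one_add_C_mul_X_of_card_lt {s : Finset ι} (r : ι → R) {j : ℕ}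
    (h : s.card < j) : coeff j (∏ i ∈ s, (1 + C (r i) * X)) = 0 := by
  rw [coeff_prod_one_add_C_mul_X, Finset.powersetCard_eq_empty.mpr h, Finset.sum_empty]

end PowerSeries

open PowerSeries

theorem genSeries_mul_prod_one_sub (N : ℕ) :
    genSeries N * ∏ i, (1 - C (xv N i) * X) = ∏ i, (1 + C (xv N i) * X) := by
  rw [genSeries, ← Finset.prod_mul_distrib]
  refine Finset.prod_congr rfl fun i _ => ?_
  rw [mul_assoc, invOfUnit_mul _ 1 (by simp), mul_one]

theorem constantCoeff_genSeries (N : ℕ) : constantCoeff (genSeries N) = 1 := by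
  simp [genSeries]

theorem coeff_prod_one_sub_av (N : ℕ) (s : Finset ℕ) (j : ℕ) :
    coeff j (∏ i ∈ s, (1 - C (av N i) * X)) = (-1) ^ j * esymA N s j := by
  simp_rw [sub_eq_add_neg, ← neg_mul, ← map_neg, coeff_prod_one_add_C_mul_X, esymA,
    Finset.mul_sum]
  refine Finset.sum_congr rfl fun t ht => ?_
  rw [Finset.prod_neg, (Finset.mem_powersetCard.mp ht).2]

/-- The top term `j = m` of the convolution vanishes: `e_m` of the `m - 1` parameters
`a_2, …, a_m` is zero. -/
theorem Qfact_eq_coeff_mul_genSeries (N m : ℕ) :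
    Qfact N m = coeff m ((∏ i ∈ Icc 2 m, (1 - C (av N i) * X)) * genSeries N) := by
  rcases Nat.eq_zero_or_pos m with rfl | hm
  · simp [Qfact, constantCoeff_genSeries]
  rw [Qfact, if_neg hm.ne', coeff_mul, Nat.sum_antidiagonal_eq_sum_range_succ_mk,
    Finset.sum_range_succ, coeff_prod_one_sub_av, esymA,
    Finset.powersetCard_eq_empty.mpr (by simp; omega)]
  simp only [Finset.sum_empty, mul_zero, zero_mul, add_zero, coeff_prod_one_sub_av, Qone]

section Specialization

variable {n : ℕ} (δ : Fin n → Bool)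

theorem specHom_xv (j : Fin n) :
    specHom n δ (xv n j) = if δ j then MvPolynomial.X j else 0 := by
  simp [specHom, xv]

theorem specHom_av_of_le {i : ℕ} (h2 : 2 ≤ i) (hi : i ≤ n + 1) :
    specHom n δ (av n i) = MvPolynomial.X ⟨n + 1 - i, by omega⟩ := by
  simp only [specHom, av, if_pos h2, MvPolynomial.eval₂Hom_X', Sum.elim_inr]
  rw [dif_pos (by omega)]
  congr 2
  omega

theorem specHom_av_of_lt {i : ℕ} (hi : n + 1 < i) : specHom n δ (av n i) = 0 := by
  simp only [specHom, av, if_pos (by omega : 2 ≤ i), MvPolynomial.eval₂Hom_X', Sum.elim_inr]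
  rw [dif_neg (by omega)]

theorem map_specHom_prod_one_sub_av {m : ℕ} (hm : n < m) :
    map (specHom n δ) (∏ i ∈ Icc 2 m, (1 - C (av n i) * X)) =
      ∏ j : Fin n, (1 - C (MvPolynomial.X j) * X) := by
  simp only [map_prod, map_sub, map_one, map_mul, map_C, map_X]
  rw [← Finset.prod_subset (Icc_subset_Icc le_rfl hm : Icc 2 (n + 1) ⊆ Icc 2 m)
    fun i hi hni => by
      simp only [mem_Icc] at hi hni
      rw [specHom_av_of_lt δ (by omega), map_zero, zero_mul, sub_zero]]
  refine Finset.prod_bij' (fun i hi => ⟨n + 1 - i, by rw [mem_Icc] at hi; omega⟩)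
    (fun j _ => n + 1 - j) (by simp) (fun j _ => by rw [mem_Icc]; omega)
    (fun i hi => by rw [mem_Icc] at hi; simp only; omega) (fun j _ => by ext; simp only; omega)
    fun i hi => by rw [specHom_av_of_le δ (mem_Icc.mp hi).1 (mem_Icc.mp hi).2]

theorem map_specHom_prod_one_sub_av_mul_genSeries {m : ℕ} (hm : n < m) :
    map (specHom n δ) ((∏ i ∈ Icc 2 m, (1 - C (av n i) * X)) * genSeries n) =
      ∏ j : Fin n, (1 + C (if δ j then MvPolynomial.X j else -MvPolynomial.X j) * X) := by
  set G := map (specHom n δ) (genSeries n)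
  set c : Fin n → MvPolynomial (Fin n) ℤ := fun j => if δ j then MvPolynomial.X j else 0
  set e : Fin n → (MvPolynomial (Fin n) ℤ)⟦X⟧ := fun j =>
    if δ j then 1 else 1 - C (MvPolynomial.X j) * X
  have hG : G * ∏ j, (1 - C (c j) * X) = ∏ j, (1 + C (c j) * X) := by
    simpa [map_prod, map_C, map_X, specHom_xv] using
      congrArg (map (specHom n δ)) (genSeries_mul_prod_one_sub n)
  calc map (specHom n δ) ((∏ i ∈ Icc 2 m, (1 - C (av n i) * X)) * genSeries n)
      = (∏ j, (1 - C (c j) * X) * e j) * G := by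
        rw [map_mul, map_specHom_prod_one_sub_av δ hm]
        congr 1
        exact Finset.prod_congr rfl fun j _ => by
          by_cases h : δ j <;> simp [c, e, h, sub_eq_add_neg]
    _ = (G * ∏ j, (1 - C (c j) * X)) * ∏ j, e j := by rw [Finset.prod_mul_distrib]; ring
    _ = _ := by
        rw [hG, ← Finset.prod_mul_distrib]
        exact Finset.prod_congr rfl fun j _ => by
          by_cases h : δ j <;> simp [c, e, h, sub_eq_add_neg]

theorem specHom_Qfact_eq_zero {m : ℕ} (hm : n < m) : specHom n δ (Qfact n m) = 0 := by
  rw [Qfact_eq_coeff_mul_genSeries, ← coeff_map, map_specHom_prod_one_sub_av_mul_genSeries δ hm,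
    coeff_prod_one_add_C_mul_X_of_card_lt _ (by simpa using hm)]

end Specialization

theorem Qfact2_specialized_vanishes_general (n : ℕ) (δ : Fin n → Bool)
    (k l : ℕ) (hk : n < k) :
    specHom n δ (Qfact2 n k l) = 0 := by
  have hQ : ∀ m, k ≤ m → specHom n δ (Qfact n m) = 0 := fun m hm =>
    specHom_Qfact_eq_zero δ (hk.trans_le hm)
  simp only [Qfact2, map_add, map_mul, map_sum]
  rw [hQ k le_rfl,
    Finset.sum_eq_zero fun i _ => by rw [hQ (k + i) (by omega), mul_zero, zero_mul],
    Finset.sum_eq_zero fun r hr => Finset.sum_eq_zero fun s _ => by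
      rw [hQ r (mem_Icc.mp hr).1, mul_zero, zero_mul]]
  simp

/-- For `n ≥ 1`, `δ ∈ {0,1}^n`, `k > n` and `1 ≤ ℓ ≤ k`, the specialized two-row
factorial Schur Q-polynomial `Q_{k,ℓ}(x_δ | x_⟨n⟩)` is the zero polynomial in
`ℤ[x_1,…,x_n]`. -/
theorem Qfact2_specialized_vanishes (n : ℕ) (hn : 1 ≤ n) (δ : Fin n → Bool)
    (k l : ℕ) (hk : n < k) (hl1 : 1 ≤ l) (hlk : l ≤ k) :
    specHom n δ (Qfact2 n k l) = 0 :=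
  Qfact2_specialized_vanishes_general n δ k l hk

end
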